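/- Let M ∈ [0, 2] and let ξ ∈ S_C(M). Then there exists ζ ∈ S_R(M) such that τ(ζ) = |τ(ξ)| and δ(ζ) = |δ(ξ)|; in particular, for any real β₀, β₁, β₂, E_U(ζ) = E_U(ξ). -/

import Mathlib

noncomputable section

/-- τ for complex 5-vectors (ξ₂, ξ₁, ξ₀, ξ₋₁, ξ₋₂). -/
def tauC (z2 z1 z0 zm1 zm2 : ℂ) : ℂ :=
  2 * ((starRingEnd ℂ) z2 * z1 + (starRingEnd ℂ) zm1 * zm2)
    + (Real.sqrt 6 : ℂ) * ((starRingEnd ℂ) z1 * z0 + (starRingEnd ℂ) z0 * zm1)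

/-- δ for complex 5-vectors. -/
def deltaC (z2 z1 z0 zm1 zm2 : ℂ) : ℂ :=
  2 * z2 * zm2 - 2 * z1 * zm1 + z0 ^ 2

/-- F_z for complex 5-vectors. -/
def FzC (z2 z1 z0 zm1 zm2 : ℂ) : ℝ :=
  2 * (‖z2‖ ^ 2 - ‖zm2‖ ^ 2)
    + ‖z1‖ ^ 2 - ‖zm1‖ ^ 2

/-- Membership in S_C(M): mass and magnetization constraints. -/
def memSC (M : ℝ) (z2 z1 z0 zm1 zm2 : ℂ) : Prop :=
  ‖z2‖ ^ 2 + ‖z1‖ ^ 2 + ‖z0‖ ^ 2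
      + ‖zm1‖ ^ 2 + ‖zm2‖ ^ 2 = 1 ∧
  2 * ‖z2‖ ^ 2 + ‖z1‖ ^ 2
      - ‖zm1‖ ^ 2 - 2 * ‖zm2‖ ^ 2 = M

/-- The uniform energy E_U. -/
def EU (b0 b1 b2 M : ℝ) (z2 z1 z0 zm1 zm2 : ℂ) : ℝ :=
  (1 / 2) * (b1 * ‖tauC z2 z1 z0 zm1 zm2‖ ^ 2
    + (b2 / 5) * ‖deltaC z2 z1 z0 zm1 zm2‖ ^ 2
    + b0 + b1 * M ^ 2)

/-!
Let F = (Re τ, Im τ, F_z) be the spin vector of ξ and N = ‖ξ‖². Every ξ ∈ ℂ⁵ satisfies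
‖F‖² + 4|δ|² ≤ 4N². Indeed F is a positive combination of four spin-½ Bloch vectors whose lengths
add up to 2N, so ‖F‖ ≤ 2N. Applying this bound to ξ - t u θξ, where θ is time reversal and u the
phase of δ, multiplies F by 1 - t² and turns N into (1 + t²)N - 2t|δ|; the resulting quadratic
inequality in t has nonpositive discriminant.

Conversely every (M, T, D) with M² + T² + 4D² ≤ 4 is attained by a real state with τ = T and
δ = D. Real states are binary quartics, on which the rotation about the y-axis acts by a linear
substitution that preserves N and δ and rotates (F_z, F_x). A state (p, 0, q, 0, e) has F along
the z-axis, with length √(M² + T²) and δ = D for suitable p, q, e, and a rotation turns F into (M, T).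
-/

open ComplexConjugate

def normSqC (z2 z1 z0 zm1 zm2 : ℂ) : ℝ := ‖z2‖ ^ 2 + ‖z1‖ ^ 2 + ‖z0‖ ^ 2 + ‖zm1‖ ^ 2 + ‖zm2‖ ^ 2

def blochVector (a b : ℂ) : WithLp 2 (ℂ × ℝ) := WithLp.toLp 2 (2 * conj a * b, ‖a‖ ^ 2 - ‖b‖ ^ 2)

theorem norm_blochVector (a b : ℂ) : ‖blochVector a b‖ = ‖a‖ ^ 2 + ‖b‖ ^ 2 := by
  rw [WithLp.prod_norm_eq_of_L2, Real.sqrt_eq_iff_mul_self_eq (by positivity) (by positivity)]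
  simp only [blochVector, WithLp.toLp_fst, WithLp.toLp_snd, Complex.norm_mul, Complex.norm_ofNat,
    RCLike.norm_conj, Real.norm_eq_abs, sq_abs]
  ring

def spinVector (z2 z1 z0 zm1 zm2 : ℂ) : WithLp 2 (ℂ × ℝ) :=
  WithLp.toLp 2 (tauC z2 z1 z0 zm1 zm2, FzC z2 z1 z0 zm1 zm2)

theorem norm_spinVector_sq (z2 z1 z0 zm1 zm2 : ℂ) :
    ‖spinVector z2 z1 z0 zm1 zm2‖ ^ 2 = ‖tauC z2 z1 z0 zm1 zm2‖ ^ 2 + FzC z2 z1 z0 zm1 zm2 ^ 2 := by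
  rw [WithLp.prod_norm_sq_eq_of_L2, Real.norm_eq_abs, sq_abs]
  rfl

theorem spinVector_eq_bloch (z2 z1 z0 zm1 zm2 : ℂ) :
    spinVector z2 z1 z0 zm1 zm2 =
      (1 / 2 : ℝ) • blochVector (2 * z2) z1 + (1 / 4 : ℝ) • blochVector (√6 * z1) (2 * z0)
        + (1 / 4 : ℝ) • blochVector (2 * z0) (√6 * zm1) + (1 / 2 : ℝ) • blochVector zm1 (2 * zm2) := by
  have h6 : √6 ^ 2 = 6 := Real.sq_sqrt (by norm_num)
  refine WithLp.ofLp_injective 2 (Prod.ext ?_ ?_)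
  · simp only [spinVector, tauC, blochVector, WithLp.ofLp_add, WithLp.ofLp_smul, Prod.smul_mk,
      Prod.mk_add_mk, Complex.real_smul, map_mul, map_ofNat, Complex.conj_ofReal]
    push_cast
    ring
  · simp only [spinVector, FzC, blochVector, WithLp.ofLp_add, WithLp.ofLp_smul, Prod.smul_mk,
      Prod.mk_add_mk, smul_eq_mul, Complex.norm_mul, Complex.norm_ofNat, Complex.norm_real,
      Real.norm_eq_abs, sq_abs, mul_pow, h6]
    ring

theorem norm_spinVector_le (z2 z1 z0 zm1 zm2 : ℂ) :
    ‖spinVector z2 z1 z0 zm1 zm2‖ ≤ 2 * normSqC z2 z1 z0 zm1 zm2 := by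
  have h6 : √6 ^ 2 = 6 := Real.sq_sqrt (by norm_num)
  rw [spinVector_eq_bloch]
  refine norm_add₄_le.trans_eq ?_
  simp only [norm_smul, norm_blochVector, Real.norm_eq_abs, Complex.norm_mul, Complex.norm_ofNat,
    Complex.norm_real, sq_abs, mul_pow, h6, normSqC]
  norm_num
  ring

-- `(conj zm2, -conj zm1, conj z0, -conj z1, conj z2)` is the time reversal θξ of ξ.
theorem spinVector_add_timeReversal (z2 z1 z0 zm1 zm2 l : ℂ) :
    spinVector (z2 + l * conj zm2) (z1 - l * conj zm1) (z0 + l * conj z0) (zm1 - l * conj z1)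
        (zm2 + l * conj z2) = (1 - ‖l‖ ^ 2) • spinVector z2 z1 z0 zm1 zm2 := by
  refine WithLp.ofLp_injective 2 (Prod.ext ?_ ?_)
  · simp only [spinVector, tauC, WithLp.ofLp_smul, Prod.smul_fst, Complex.real_smul, map_add, map_sub,
      map_mul, Complex.conj_conj, Complex.ofReal_sub, Complex.ofReal_one,
      Complex.ofReal_pow, ← Complex.mul_conj']
    ring
  · apply Complex.ofReal_injective
    simp only [spinVector, FzC, WithLp.ofLp_smul, Prod.smul_snd, smul_eq_mul, Complex.ofReal_mul,
      Complex.ofReal_add, Complex.ofReal_sub, Complex.ofReal_one, Complex.ofReal_pow,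
      Complex.ofReal_ofNat, ← Complex.mul_conj', map_add, map_sub, map_mul, Complex.conj_conj]
    ring

theorem normSqC_add_timeReversal (z2 z1 z0 zm1 zm2 l : ℂ) :
    normSqC (z2 + l * conj zm2) (z1 - l * conj zm1) (z0 + l * conj z0) (zm1 - l * conj z1)
        (zm2 + l * conj z2) =
      (1 + ‖l‖ ^ 2) * normSqC z2 z1 z0 zm1 zm2 + 2 * (conj l * deltaC z2 z1 z0 zm1 zm2).re := by
  apply Complex.ofReal_injective
  simp only [normSqC, deltaC, Complex.ofReal_mul, Complex.ofReal_add, Complex.ofReal_one,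
    Complex.ofReal_pow, Complex.ofReal_ofNat, Complex.re_eq_add_conj, ← Complex.mul_conj', map_add,
    map_sub, map_mul, map_pow, map_ofNat, Complex.conj_conj]
  ring

theorem norm_spinVector_sq_add_four_mul_norm_deltaC_sq_le (z2 z1 z0 zm1 zm2 : ℂ) :
    ‖spinVector z2 z1 z0 zm1 zm2‖ ^ 2 + 4 * ‖deltaC z2 z1 z0 zm1 zm2‖ ^ 2
      ≤ (2 * normSqC z2 z1 z0 zm1 zm2) ^ 2 := by
  set N := normSqC z2 z1 z0 zm1 zm2
  set ρ := ‖spinVector z2 z1 z0 zm1 zm2‖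
  set δ := deltaC z2 z1 z0 zm1 zm2
  set u := Complex.exp (δ.arg * Complex.I)
  have hu : ‖u‖ = 1 := Complex.norm_exp_ofReal_mul_I _
  have hδ : conj u * δ = ‖δ‖ := by
    rw [← Complex.norm_mul_exp_arg_mul_I δ, mul_left_comm, Complex.conj_mul', hu]
    simp
  have hquad : ∀ t : ℝ, 0 ≤ (2 * N + ρ) * (t * t) + (-4 * ‖δ‖) * t + (2 * N - ρ) := by
    intro t
    have h := norm_spinVector_le (z2 + -(t * u) * conj zm2) (z1 - -(t * u) * conj zm1)
      (z0 + -(t * u) * conj z0) (zm1 - -(t * u) * conj z1) (zm2 + -(t * u) * conj z2)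
    have hl : ‖-(t * u)‖ ^ 2 = t ^ 2 := by simp only [norm_neg, norm_mul, Complex.norm_real, hu, mul_one, Real.norm_eq_abs, sq_abs]
    have hre : (conj (-(t * u)) * δ).re = -t * ‖δ‖ := by
      rw [map_neg, map_mul, Complex.conj_ofReal, neg_mul, mul_assoc, hδ]
      simp
    rw [spinVector_add_timeReversal, normSqC_add_timeReversal, norm_smul, hl, hre,
      Real.norm_eq_abs] at h
    nlinarith [le_abs_self (1 - t ^ 2), norm_nonneg (spinVector z2 z1 z0 zm1 zm2)]
  have hdisc := discrim_le_zero hquad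
  rw [discrim] at hdisc
  nlinarith

theorem exists_half_angle (x y : ℝ) :
    ∃ c s : ℝ, c ^ 2 + s ^ 2 = 1 ∧ √(x ^ 2 + y ^ 2) * (c ^ 2 - s ^ 2) = x ∧
      √(x ^ 2 + y ^ 2) * (2 * c * s) = y := by
  set w : ℂ := ⟨x, y⟩
  have hw : ‖w‖ = √(x ^ 2 + y ^ 2) := Complex.norm_eq_sqrt_sq_add_sq w
  refine ⟨Real.cos (w.arg / 2), Real.sin (w.arg / 2), by rw [add_comm, Real.sin_sq_add_cos_sq], ?_, ?_⟩
  · rw [← Real.cos_two_mul', mul_div_cancel₀ _ two_ne_zero, ← hw, Complex.norm_mul_cos_arg]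
  · have h2 := Real.sin_two_mul (w.arg / 2)
    rw [mul_div_cancel₀ _ two_ne_zero] at h2
    calc √(x ^ 2 + y ^ 2) * (2 * Real.cos (w.arg / 2) * Real.sin (w.arg / 2))
        = ‖w‖ * Real.sin w.arg := by rw [h2, hw]; ring
      _ = y := Complex.norm_mul_sin_arg w

/- `a : Fin 5 → ℝ` stands for the real state (a₀, 2a₁, √6 a₂, 2a₃, a₄), i.e. the binary quartic
Σ C(4,k) aₖ u^(4-k) v^k, so that N, F_z, τ = F_x and δ have rational coefficients; `invariant` is
twice the classical invariant a₀a₄ - 4a₁a₃ + 3a₂², and `rotate a c s` is the substitution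
(u, v) ↦ (cu + sv, -su + cv). -/
namespace BinaryQuartic

variable (a : Fin 5 → ℝ)

def normSq : ℝ := a 0 ^ 2 + 4 * a 1 ^ 2 + 6 * a 2 ^ 2 + 4 * a 3 ^ 2 + a 4 ^ 2
def spinZ : ℝ := 2 * a 0 ^ 2 + 4 * a 1 ^ 2 - 4 * a 3 ^ 2 - 2 * a 4 ^ 2
def spinX : ℝ := 4 * (a 0 * a 1 + a 3 * a 4) + 12 * (a 1 * a 2 + a 2 * a 3)
def invariant : ℝ := 2 * a 0 * a 4 - 8 * a 1 * a 3 + 6 * a 2 ^ 2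

def rotate (c s : ℝ) : Fin 5 → ℝ :=
  ![c ^ 4 * a 0 - 4 * c ^ 3 * s * a 1 + 6 * c ^ 2 * s ^ 2 * a 2 - 4 * c * s ^ 3 * a 3 + s ^ 4 * a 4,
    c ^ 3 * s * a 0 + (c ^ 4 - 3 * c ^ 2 * s ^ 2) * a 1 - 3 * c * s * (c ^ 2 - s ^ 2) * a 2
      + (3 * c ^ 2 * s ^ 2 - s ^ 4) * a 3 - c * s ^ 3 * a 4,
    c ^ 2 * s ^ 2 * a 0 + 2 * c * s * (c ^ 2 - s ^ 2) * a 1 + (c ^ 4 - 4 * c ^ 2 * s ^ 2 + s ^ 4) * a 2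
      - 2 * c * s * (c ^ 2 - s ^ 2) * a 3 + c ^ 2 * s ^ 2 * a 4,
    c * s ^ 3 * a 0 + (3 * c ^ 2 * s ^ 2 - s ^ 4) * a 1 + 3 * c * s * (c ^ 2 - s ^ 2) * a 2
      + (c ^ 4 - 3 * c ^ 2 * s ^ 2) * a 3 - c ^ 3 * s * a 4,
    s ^ 4 * a 0 + 4 * c * s ^ 3 * a 1 + 6 * c ^ 2 * s ^ 2 * a 2 + 4 * c ^ 3 * s * a 3 + c ^ 4 * a 4]

variable (c s : ℝ)

theorem normSq_rotate : normSq (rotate a c s) = (c ^ 2 + s ^ 2) ^ 4 * normSq a := by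
  simp only [normSq, rotate, Matrix.cons_val_zero, Matrix.cons_val_one, Matrix.cons_val]
  ring

theorem invariant_rotate : invariant (rotate a c s) = (c ^ 2 + s ^ 2) ^ 4 * invariant a := by
  simp only [invariant, rotate, Matrix.cons_val_zero, Matrix.cons_val_one, Matrix.cons_val]
  ring

theorem spinZ_rotate : spinZ (rotate a c s) =
    (c ^ 2 + s ^ 2) ^ 3 * ((c ^ 2 - s ^ 2) * spinZ a - 2 * c * s * spinX a) := by
  simp only [spinZ, spinX, rotate, Matrix.cons_val_zero, Matrix.cons_val_one, Matrix.cons_val]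
  ring

theorem spinX_rotate : spinX (rotate a c s) =
    (c ^ 2 + s ^ 2) ^ 3 * (2 * c * s * spinZ a + (c ^ 2 - s ^ 2) * spinX a) := by
  simp only [spinZ, spinX, rotate, Matrix.cons_val_zero, Matrix.cons_val_one, Matrix.cons_val]
  ring

theorem exists_of_sq_add_four_mul_sq_le {Z D : ℝ} (h : Z ^ 2 + 4 * D ^ 2 ≤ 4) :
    ∃ a, normSq a = 1 ∧ spinZ a = Z ∧ spinX a = 0 ∧ invariant a = D := by
  -- `b = 6q²` is the weight of the middle entry; the remaining weight `1 - b` has to be the length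
  -- of `(Z / 2, D - b) = (p² - e², 2pe)`.
  obtain ⟨b, hb0, hb1, hb⟩ : ∃ b : ℝ, 0 ≤ b ∧ b ≤ 1 ∧ (Z / 2) ^ 2 + (D - b) ^ 2 = (1 - b) ^ 2 := by
    rcases eq_or_ne D 1 with rfl | hD
    · exact ⟨0, le_rfl, zero_le_one, by nlinarith⟩
    have hD1 : D < 1 := lt_of_le_of_ne (by nlinarith) hD
    refine ⟨(1 - Z ^ 2 / 4 - D ^ 2) / (2 * (1 - D)), div_nonneg (by linarith) (by linarith), ?_, ?_⟩
    · rw [div_le_one (by linarith)]; nlinarith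
    · field_simp; ring
  obtain ⟨c, s, hcs, hc, hs⟩ := exists_half_angle (Z / 2) (D - b)
  rw [hb, Real.sqrt_sq (by linarith)] at hc hs
  obtain ⟨r, hr⟩ : ∃ r : ℝ, r ^ 2 = 1 - b := ⟨√(1 - b), Real.sq_sqrt (by linarith)⟩
  obtain ⟨q, hq⟩ : ∃ q : ℝ, 6 * q ^ 2 = b :=
    ⟨√(b / 6), by rw [Real.sq_sqrt (by positivity)]; ring⟩
  refine ⟨![r * c, 0, q, 0, r * s], ?_, ?_, ?_, ?_⟩ <;>
    simp only [normSq, spinZ, spinX, invariant, Matrix.cons_val_zero, Matrix.cons_val_one, Matrix.cons_val]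
  · linear_combination r ^ 2 * hcs + hr + hq
  · linear_combination 2 * hc + 2 * (c ^ 2 - s ^ 2) * hr
  · ring
  · linear_combination hs + 2 * c * s * hr + hq

theorem exists_of_sq_add_sq_add_four_mul_sq_le {M T D : ℝ} (h : M ^ 2 + T ^ 2 + 4 * D ^ 2 ≤ 4) :
    ∃ a, normSq a = 1 ∧ spinZ a = M ∧ spinX a = T ∧ invariant a = D := by
  obtain ⟨c, s, hcs, hc, hs⟩ := exists_half_angle M T
  obtain ⟨a, ha⟩ := exists_of_sq_add_four_mul_sq_le (Z := √(M ^ 2 + T ^ 2)) (D := D) (by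
    rwa [Real.sq_sqrt (by positivity)])
  refine ⟨rotate a c s, ?_⟩
  rw [normSq_rotate, spinZ_rotate, spinX_rotate, invariant_rotate, hcs]
  simp only [ha]
  refine ⟨by ring, ?_, ?_, by ring⟩ <;> linarith

theorem memSC_iff (M : ℝ) :
    memSC M (a 0 : ℂ) ((2 * a 1 : ℝ) : ℂ) ((√6 * a 2 : ℝ) : ℂ) ((2 * a 3 : ℝ) : ℂ) (a 4 : ℂ) ↔
      normSq a = 1 ∧ spinZ a = M := by
  norm_num [memSC, normSq, spinZ, Complex.norm_real, mul_pow]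

theorem tauC_eq :
    tauC (a 0 : ℂ) ((2 * a 1 : ℝ) : ℂ) ((√6 * a 2 : ℝ) : ℂ) ((2 * a 3 : ℝ) : ℂ) (a 4 : ℂ) = spinX a := by
  have h6 : ((√6 : ℝ) : ℂ) ^ 2 = 6 := by exact_mod_cast Real.sq_sqrt (by norm_num : (0 : ℝ) ≤ 6)
  simp only [tauC, spinX, Complex.conj_ofReal]
  push_cast
  linear_combination 2 * (a 1 * a 2 + a 2 * a 3) * h6

theorem deltaC_eq :
    deltaC (a 0 : ℂ) ((2 * a 1 : ℝ) : ℂ) ((√6 * a 2 : ℝ) : ℂ) ((2 * a 3 : ℝ) : ℂ) (a 4 : ℂ) = invariant a := by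
  have h6 : ((√6 : ℝ) : ℂ) ^ 2 = 6 := by exact_mod_cast Real.sq_sqrt (by norm_num : (0 : ℝ) ≤ 6)
  simp only [deltaC, invariant]
  push_cast
  linear_combination a 2 ^ 2 * h6

end BinaryQuartic

theorem sq_add_sq_add_four_mul_sq_le_of_memSC {M : ℝ} {z2 z1 z0 zm1 zm2 : ℂ}
    (h : memSC M z2 z1 z0 zm1 zm2) :
    M ^ 2 + ‖tauC z2 z1 z0 zm1 zm2‖ ^ 2 + 4 * ‖deltaC z2 z1 z0 zm1 zm2‖ ^ 2 ≤ 4 := by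
  have hN : normSqC z2 z1 z0 zm1 zm2 = 1 := h.1
  have hF : FzC z2 z1 z0 zm1 zm2 = M := by rw [← h.2, FzC]; ring
  have := norm_spinVector_sq_add_four_mul_norm_deltaC_sq_le z2 z1 z0 zm1 zm2
  rw [norm_spinVector_sq, hF, hN] at this
  linarith

theorem stmt4_general (M : ℝ) (z2 z1 z0 zm1 zm2 : ℂ)
    (h : memSC M z2 z1 z0 zm1 zm2) :
    ∃ r2 r1 r0 rm1 rm2 : ℝ,
      memSC M (r2 : ℂ) (r1 : ℂ) (r0 : ℂ) (rm1 : ℂ) (rm2 : ℂ) ∧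
      tauC (r2 : ℂ) (r1 : ℂ) (r0 : ℂ) (rm1 : ℂ) (rm2 : ℂ)
        = (‖tauC z2 z1 z0 zm1 zm2‖ : ℂ) ∧
      deltaC (r2 : ℂ) (r1 : ℂ) (r0 : ℂ) (rm1 : ℂ) (rm2 : ℂ)
        = (‖deltaC z2 z1 z0 zm1 zm2‖ : ℂ) ∧
      ∀ b0 b1 b2 : ℝ,
        EU b0 b1 b2 M (r2 : ℂ) (r1 : ℂ) (r0 : ℂ) (rm1 : ℂ) (rm2 : ℂ)
          = EU b0 b1 b2 M z2 z1 z0 zm1 zm2 := by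
  obtain ⟨a, haN, haM, haT, haD⟩ :=
    BinaryQuartic.exists_of_sq_add_sq_add_four_mul_sq_le (sq_add_sq_add_four_mul_sq_le_of_memSC h)
  have hτ := BinaryQuartic.tauC_eq a
  have hδ := BinaryQuartic.deltaC_eq a
  rw [haT] at hτ
  rw [haD] at hδ
  refine ⟨a 0, 2 * a 1, √6 * a 2, 2 * a 3, a 4, (BinaryQuartic.memSC_iff a M).2 ⟨haN, haM⟩,
    hτ, hδ, fun b0 b1 b2 => ?_⟩
  simp only [EU, hτ, hδ, Complex.norm_real, norm_norm]

theorem stmt4 (M : ℝ) (hM0 : 0 ≤ M) (hM2 : M ≤ 2) (z2 z1 z0 zm1 zm2 : ℂ)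
    (h : memSC M z2 z1 z0 zm1 zm2) :
    ∃ r2 r1 r0 rm1 rm2 : ℝ,
      memSC M (r2 : ℂ) (r1 : ℂ) (r0 : ℂ) (rm1 : ℂ) (rm2 : ℂ) ∧
      tauC (r2 : ℂ) (r1 : ℂ) (r0 : ℂ) (rm1 : ℂ) (rm2 : ℂ)
        = (‖tauC z2 z1 z0 zm1 zm2‖ : ℂ) ∧
      deltaC (r2 : ℂ) (r1 : ℂ) (r0 : ℂ) (rm1 : ℂ) (rm2 : ℂ)
        = (‖deltaC z2 z1 z0 zm1 zm2‖ : ℂ) ∧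
      ∀ b0 b1 b2 : ℝ,
        EU b0 b1 b2 M (r2 : ℂ) (r1 : ℂ) (r0 : ℂ) (rm1 : ℂ) (rm2 : ℂ)
          = EU b0 b1 b2 M z2 z1 z0 zm1 zm2 :=
  stmt4_general M z2 z1 z0 zm1 zm2 h
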